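/- arXiv:2302.06702 — 6 statements merged into one kernel-verified Lean document; each statement's English description precedes it below -/
import Mathlib

section
/- For any elements a, b, c, d of a group G, one has [a,b][b,c][c,d][d,a] = (ab) · [a^{-1}c, b^{-1}d] · (ab)^{-1}. -/
open scoped commutatorElement

theorem four_commutator_identity {G : Type*} [Group G] (a b c d : G) :
    ⁅a, b⁆ * ⁅b, c⁆ * ⁅c, d⁆ * ⁅d, a⁆ = (a * b) * ⁅a⁻¹ * c, b⁻¹ * d⁆ * (a * b)⁻¹ := by
  simp only [commutatorElement_def]
  group
end

section
/- For any elements a, b, c of a group G, one has [a,b][b,c][c,a] = (ab) · [a^{-1}c, b^{-1}a] · (ab)^{-1}. In particular, [a,b][b,c][c,a] is a commutator in G. -/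
open scoped commutatorElement

theorem three_commutator_identity {G : Type*} [Group G] (a b c : G) :
    (⁅a, b⁆ * ⁅b, c⁆ * ⁅c, a⁆ = (a * b) * ⁅a⁻¹ * c, b⁻¹ * a⁆ * (a * b)⁻¹) ∧
    (∃ x y : G, ⁅a, b⁆ * ⁅b, c⁆ * ⁅c, a⁆ = ⁅x, y⁆) := by
  have h : ⁅a, b⁆ * ⁅b, c⁆ * ⁅c, a⁆ = (a * b) * ⁅a⁻¹ * c, b⁻¹ * a⁆ * (a * b)⁻¹ := by
    simp [commutatorElement_def, mul_assoc]
  exact ⟨h, (a*b)*(a⁻¹*c)*(a*b)⁻¹, (a*b)*(b⁻¹*a)*(a*b)⁻¹, by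
    rw [h]; simp [commutatorElement_def, mul_assoc]⟩
end

section
/- Let G be a group, u, V ∈ G, and n a positive integer. If u · V u V^{-1} is a commutator in G, then the product ∏_{i=1}^{n} V^{i-1} u V^{-(i-1)} (taken in increasing order of i) can be written as a product of ⌈n/2⌉ commutators when n is even, and as a product of (n+1)/2 elements each of which is either a commutator or a conjugate of u, when n is odd; more precisely: if n = 2k the product equals a product of k commutators, and if n = 2k+1 it equals a product of k commutators times a conjugate of u. -/
open scoped commutatorElement

/-- `x` is a product of `n` commutators in `G`. -/
def IsProdOfCommutators {G : Type*} [Group G] (n : ℕ) (x : G) : Prop :=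
  ∃ a b : Fin n → G, x = (List.ofFn fun i => ⁅a i, b i⁆).prod

lemma isProdOfCommutators_zero {G : Type*} [Group G] : IsProdOfCommutators 0 (1 : G) :=
  ⟨fun _ => 1, fun _ => 1, by simp⟩

lemma IsProdOfCommutators.mul_commutator {G : Type*} [Group G] {k : ℕ} {x : G}
    (hx : IsProdOfCommutators k x) (a b : G) :
    IsProdOfCommutators (k + 1) (x * ⁅a, b⁆) := by
  obtain ⟨f, g, rfl⟩ := hx
  refine ⟨Fin.snoc f a, Fin.snoc g b, ?_⟩
  rw [List.ofFn_succ']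
  simp [Fin.snoc_castSucc, Fin.snoc_last]

lemma even_case {G : Type*} [Group G] (u V : G)
    (h : ∃ a b : G, u * (V * u * V⁻¹) = ⁅a, b⁆) (k : ℕ) :
    IsProdOfCommutators k (((List.range (2 * k)).map fun i => V ^ i * u * (V ^ i)⁻¹).prod) := by
  obtain ⟨a, b, hab⟩ := h
  induction k with
  | zero => simpa using isProdOfCommutators_zero
  | succ k ih =>
      have h2 : 2 * (k + 1) = (2 * k + 1) + 1 := by ring
      rw [h2, List.range_succ, List.range_succ, List.map_append, List.map_append,
        List.prod_append, List.prod_append]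
      simp only [List.map_cons, List.map_nil, List.prod_cons, List.prod_nil, mul_one]
      rw [mul_assoc]
      have key : (V ^ (2 * k) * u * (V ^ (2 * k))⁻¹) *
          (V ^ (2 * k + 1) * u * (V ^ (2 * k + 1))⁻¹) =
          ⁅V ^ (2 * k) * a * (V ^ (2 * k))⁻¹, V ^ (2 * k) * b * (V ^ (2 * k))⁻¹⁆ := by
        have : (V ^ (2 * k) * u * (V ^ (2 * k))⁻¹) *
            (V ^ (2 * k + 1) * u * (V ^ (2 * k + 1))⁻¹) =
            V ^ (2 * k) * (u * (V * u * V⁻¹)) * (V ^ (2 * k))⁻¹ := by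
          rw [pow_succ]
          group
        rw [this, hab, commutatorElement_def, commutatorElement_def]
        group
      rw [key]
      exact ih.mul_commutator _ _

theorem prod_conj_is_prod_commutators {G : Type*} [Group G] (u V : G) (n : ℕ) (hn : 0 < n)
    (h : ∃ a b : G, u * (V * u * V⁻¹) = ⁅a, b⁆) :
    ∀ k : ℕ,
      (n = 2 * k →
        IsProdOfCommutators k
          (((List.range n).map fun i => V ^ i * u * (V ^ i)⁻¹).prod)) ∧
      (n = 2 * k + 1 →
        ∃ (C g : G), IsProdOfCommutators k C ∧
          ((List.range n).map fun i => V ^ i * u * (V ^ i)⁻¹).prod = C * (g * u * g⁻¹)) := by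
  intro k
  constructor
  · rintro rfl
    exact even_case u V h k
  · rintro rfl
    refine ⟨((List.range (2 * k)).map fun i => V ^ i * u * (V ^ i)⁻¹).prod, V ^ (2 * k),
      even_case u V h k, ?_⟩
    rw [List.range_succ, List.map_append, List.prod_append]
    simp
end

section
/- Let G be a group and let A, B, P, Q, R, U, V ∈ G. Then [Q,R][U,V] · [A,B][R,P^{-1}] = ([U,V])^{[Q,R]} · ([Q^{-1}P^{-1}, R^{-1}])^{QR} · ([A,B])^{[P^{-1},R]}. In particular, any product of the form ([Q,R][U,V]) · ([A,B][R,P^{-1}]) is a product of three commutators in G. -/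
open scoped commutatorElement

theorem three_commutator_product_identity {G : Type*} [Group G] (A B P Q R U V : G) :
    ⁅Q, R⁆ * ⁅U, V⁆ * (⁅A, B⁆ * ⁅R, P⁻¹⁆) =
      (⁅Q, R⁆ * ⁅U, V⁆ * ⁅Q, R⁆⁻¹) *
      ((Q * R) * ⁅Q⁻¹ * P⁻¹, R⁻¹⁆ * (Q * R)⁻¹) *
      (⁅P⁻¹, R⁆ * ⁅A, B⁆ * ⁅P⁻¹, R⁆⁻¹) := by
  group
end

section
/- Let G be a group, h ≥ 1 an integer, R ∈ G, and a_1,…,a_h, b_1,…,b_h ∈ G. Assume: (1) for all i, j ∈ {1,…,h} and all integers p, q with p ≢ q (mod h), each of R^p a_i R^{-p} and R^p b_i R^{-p} commutes with each of R^q a_j R^{-q} and R^q b_j R^{-q}; and (2) R^h commutes with every a_i and every b_i. Then, setting C_i := [a_i, b_i], A := ∏_{i=1}^h R^{h-i+1} a_i R^{-(h-i+1)}, B := ∏_{i=1}^h R^{h-i+1} b_i R^{-(h-i+1)}, and P := ∏_{i=1}^{h} (C_1^{R^{h-i}} ⋯ C_i^{R^{h-i}}), one has ∏_{i=1}^h [a_i,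 b_i] = [A, B] · [R, P^{-1}]. -/
open scoped commutatorElement

set_option linter.unusedSectionVars false

section TsuboiAux

variable {G : Type*} [Group G]

def tcnj (R : G) (p : ℕ) (x : G) : G := R ^ p * x * (R ^ p)⁻¹

lemma tcnj_mul (R : G) (p : ℕ) (x y : G) : tcnj R p (x * y) = tcnj R p x * tcnj R p y := by
  simp only [tcnj]; group

lemma tcnj_one (R : G) (p : ℕ) : tcnj R p (1 : G) = 1 := by simp [tcnj]

lemma tcnj_inv (R : G) (p : ℕ) (x : G) : tcnj R p x⁻¹ = (tcnj R p x)⁻¹ := by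
  simp only [tcnj]; group

lemma tcnj_zero (R : G) (x : G) : tcnj R 0 x = x := by simp [tcnj]

lemma tcnj_tcnj (R : G) (p q : ℕ) (x : G) : tcnj R p (tcnj R q x) = tcnj R (p + q) x := by
  simp only [tcnj, pow_add]; group

lemma tcnj_prod (R : G) (p : ℕ) (l : List G) :
    tcnj R p l.prod = (l.map (tcnj R p)).prod := by
  induction l with
  | nil => simp [tcnj]
  | cons x xs ih => simp [tcnj_mul, ih]

lemma tcnj_commutator (R : G) (p : ℕ) (x y : G) :
    tcnj R p ⁅x, y⁆ = ⁅tcnj R p x, tcnj R p y⁆ := by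
  simp only [tcnj, commutatorElement_def]; group

lemma commute_commutator_left {x y z : G} (h1 : Commute x z) (h2 : Commute y z) :
    Commute ⁅x, y⁆ z := by
  rw [commutatorElement_def]
  exact ((h1.mul_left h2).mul_left h1.inv_left).mul_left h2.inv_left

lemma commute_commutator {x y z w : G} (h1 : Commute x z) (h2 : Commute x w)
    (h3 : Commute y z) (h4 : Commute y w) : Commute ⁅x, y⁆ ⁅z, w⁆ := by
  rw [commutatorElement_def z w]
  exact (((commute_commutator_left h1 h3).mul_right (commute_commutator_left h2 h4)).mul_right
    (commute_commutator_left h1 h3).inv_right).mul_right (commute_commutator_left h2 h4).inv_right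

lemma key1 (X Y x y : G) (h1 : Commute x Y) (h2 : Commute y X)
    (h3 : Commute ⁅x, y⁆ X) (h4 : Commute ⁅x, y⁆ Y) :
    ⁅X * x, Y * y⁆ = ⁅X, Y⁆ * ⁅x, y⁆ := by
  have e1 : x * Y = Y * x := h1
  have e2 : y * X⁻¹ = X⁻¹ * y := h2.inv_right
  have e3 : ⁅x, y⁆ * X⁻¹ = X⁻¹ * ⁅x, y⁆ := h3.inv_right
  have e4 : ⁅x, y⁆ * Y⁻¹ = Y⁻¹ * ⁅x, y⁆ := h4.inv_right
  calc ⁅X * x, Y * y⁆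
      = X * (x * Y) * (x⁻¹ * ⁅x, y⁆ * (y * X⁻¹) * y⁻¹ * Y⁻¹) := by
        rw [commutatorElement_def, commutatorElement_def]; group
    _ = X * (Y * x) * (x⁻¹ * ⁅x, y⁆ * (X⁻¹ * y) * y⁻¹ * Y⁻¹) := by rw [e1, e2]
    _ = X * Y * (⁅x, y⁆ * X⁻¹) * Y⁻¹ := by rw [commutatorElement_def]; group
    _ = X * Y * (X⁻¹ * ⁅x, y⁆) * Y⁻¹ := by rw [e3]
    _ = (X * Y * X⁻¹) * (⁅x, y⁆ * Y⁻¹) := by group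
    _ = (X * Y * X⁻¹) * (Y⁻¹ * ⁅x, y⁆) := by rw [e4]
    _ = ⁅X, Y⁆ * ⁅x, y⁆ := by rw [commutatorElement_def X Y]; group

lemma ofFn_val {n : ℕ} (g : ℕ → G) :
    (List.ofFn fun i : Fin n => g i.val) = (List.range n).map g := by
  apply List.ext_getElem <;> simp

lemma not_dvd_small (h : ℕ) (d : ℤ) (hd0 : d ≠ 0) (hdlt : d.natAbs < h) : ¬ ((h : ℤ) ∣ d) := by
  intro hdvd
  have h1 : h ∣ d.natAbs := by
    have := Int.natAbs_dvd_natAbs.mpr hdvd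
    simpa using this
  have := Nat.le_of_dvd (by omega : 0 < d.natAbs) h1
  omega

lemma key_prod (n : ℕ) (x y : ℕ → G)
    (hc : ∀ i < n, ∀ j < n, i ≠ j →
      Commute (x i) (x j) ∧ Commute (x i) (y j) ∧ Commute (y i) (y j)) :
    ⁅((List.range n).map x).prod, ((List.range n).map y).prod⁆ =
      ((List.range n).map fun i => ⁅x i, y i⁆).prod := by
  induction n with
  | zero => simp
  | succ n ih =>
    have hxY : Commute (x n) ((List.range n).map y).prod := by
      apply Commute.list_prod_right
      intro z hz
      obtain ⟨j, hj, rfl⟩ := List.mem_map.mp hz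
      have hj' := List.mem_range.mp hj
      exact (hc n (by omega) j (by omega) (by omega)).2.1
    have hyX : Commute (y n) ((List.range n).map x).prod := by
      apply Commute.list_prod_right
      intro z hz
      obtain ⟨j, hj, rfl⟩ := List.mem_map.mp hz
      have hj' := List.mem_range.mp hj
      exact ((hc j (by omega) n (by omega) (by omega)).2.1).symm
    have hxX : Commute (x n) ((List.range n).map x).prod := by
      apply Commute.list_prod_right
      intro z hz
      obtain ⟨j, hj, rfl⟩ := List.mem_map.mp hz
      have hj' := List.mem_range.mp hj
      exact (hc n (by omega) j (by omega) (by omega)).1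
    have hyY : Commute (y n) ((List.range n).map y).prod := by
      apply Commute.list_prod_right
      intro z hz
      obtain ⟨j, hj, rfl⟩ := List.mem_map.mp hz
      have hj' := List.mem_range.mp hj
      exact (hc n (by omega) j (by omega) (by omega)).2.2
    rw [List.range_succ]
    simp only [List.map_append, List.prod_append, List.map_cons, List.map_nil,
      List.prod_cons, List.prod_nil, mul_one]
    rw [key1 _ _ _ _ hxY hyX (commute_commutator_left hxX hyX)
      (commute_commutator_left hxY hyY),
      ih (fun i hi j hj hij => hc i (by omega) j (by omega) hij)]

def tA (h : ℕ) (a : Fin h → G) (n : ℕ) : G := if hn : n < h then a ⟨n, hn⟩ else 1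

def tQ (h : ℕ) (a b : Fin h → G) (m : ℕ) : G :=
  ((List.range (m + 1)).map fun k => ⁅tA h a k, tA h b k⁆).prod

def tD (h : ℕ) (R : G) (a b : Fin h → G) (m : ℕ) : G :=
  ((List.range m).map fun j => tcnj R (m - 1 - j) (tQ h a b j)).prod

def tE (h : ℕ) (R : G) (a b : Fin h → G) (m : ℕ) : G :=
  ((List.range m).map fun i => tcnj R (m - i) ⁅tA h a i, tA h b i⁆).prod

variable {h : ℕ} {R : G} {a b : Fin h → G}
  (hcomm : ∀ (i j : Fin h) (p q : ℤ), ¬ ((h : ℤ) ∣ (p - q)) →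
      (Commute (R ^ p * a i * (R ^ p)⁻¹) (R ^ q * a j * (R ^ q)⁻¹) ∧
       Commute (R ^ p * a i * (R ^ p)⁻¹) (R ^ q * b j * (R ^ q)⁻¹) ∧
       Commute (R ^ p * b i * (R ^ p)⁻¹) (R ^ q * a j * (R ^ q)⁻¹) ∧
       Commute (R ^ p * b i * (R ^ p)⁻¹) (R ^ q * b j * (R ^ q)⁻¹)))


lemma tD_conj (s m : ℕ) : tcnj R s (tD h R a b m) =
    ((List.range m).map fun j => tcnj R (s + (m - 1 - j)) (tQ h a b j)).prod := by
  rw [tD, tcnj_prod, List.map_map]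
  simp only [Function.comp_def, tcnj_tcnj]

include hcomm

lemma commBase (p q : ℕ) (hpq : ¬ ((h : ℤ) ∣ (p : ℤ) - (q : ℤ))) (k l : ℕ) :
    Commute (tcnj R p (tA h a k)) (tcnj R q (tA h a l)) ∧
    Commute (tcnj R p (tA h a k)) (tcnj R q (tA h b l)) ∧
    Commute (tcnj R p (tA h b k)) (tcnj R q (tA h a l)) ∧
    Commute (tcnj R p (tA h b k)) (tcnj R q (tA h b l)) := by
  by_cases hk : k < h
  · by_cases hl : l < h
    · have := hcomm ⟨k, hk⟩ ⟨l, hl⟩ (p : ℤ) (q : ℤ) hpq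
      simp only [zpow_natCast] at this
      simpa [tA, hk, hl, tcnj] using this
    · simp [tA, hl, tcnj_one]
  · simp [tA, hk, tcnj_one]

lemma commC (p q : ℕ) (hpq : ¬ ((h : ℤ) ∣ (p : ℤ) - (q : ℤ))) (k l : ℕ) :
    Commute (tcnj R p ⁅tA h a k, tA h b k⁆) (tcnj R q ⁅tA h a l, tA h b l⁆) := by
  rw [tcnj_commutator, tcnj_commutator]
  obtain ⟨c1, c2, c3, c4⟩ := commBase hcomm p q hpq k l
  exact commute_commutator c1 c2 c3 c4

lemma commQ (p q : ℕ) (hpq : ¬ ((h : ℤ) ∣ (p : ℤ) - (q : ℤ))) (i j : ℕ) :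
    Commute (tcnj R p (tQ h a b i)) (tcnj R q (tQ h a b j)) := by
  rw [tQ, tcnj_prod, tQ, tcnj_prod]
  simp only [List.map_map, Function.comp_def]
  apply Commute.list_prod_left
  intro z hz
  obtain ⟨k, _, rfl⟩ := List.mem_map.mp hz
  apply Commute.list_prod_right
  intro w hw
  obtain ⟨l, _, rfl⟩ := List.mem_map.mp hw
  exact commC hcomm p q hpq k l

lemma commQC (p q : ℕ) (hpq : ¬ ((h : ℤ) ∣ (p : ℤ) - (q : ℤ))) (i k : ℕ) :
    Commute (tcnj R p (tQ h a b i)) (tcnj R q ⁅tA h a k, tA h b k⁆) := by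
  rw [tQ, tcnj_prod]
  simp only [List.map_map, Function.comp_def]
  apply Commute.list_prod_left
  intro z hz
  obtain ⟨l, _, rfl⟩ := List.mem_map.mp hz
  exact commC hcomm p q hpq l k



lemma tsuboi_key : ∀ m, 1 ≤ m → m ≤ h →
    tE h R a b m = tQ h a b (m - 1) * (tD h R a b m)⁻¹ * tcnj R 1 (tD h R a b m) := by
  intro m
  induction m with
  | zero => omega
  | succ k ih =>
    intro _ hkh
    rcases Nat.eq_zero_or_pos k with hk0 | hk1
    · subst hk0
      have e0 : (0 : ℕ) + 1 - 1 = 0 := rfl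
      simp only [e0, tE, tQ, tD, tcnj, List.range_succ, List.range_zero, List.map_nil,
        List.map_append, List.map_cons, List.prod_nil, List.prod_cons, List.prod_append,
        one_mul, mul_one, Nat.sub_zero, Nat.sub_self, Nat.zero_add,
        pow_zero, pow_one, inv_one]
      group
    · have ihk := ih hk1 (by omega)
      have hE : tE h R a b (k + 1) =
          tcnj R 1 (tE h R a b k) * tcnj R 1 ⁅tA h a k, tA h b k⁆ := by
        rw [tE, List.range_succ, List.map_append, List.prod_append]
        rw [tE, tcnj_prod, List.map_map]
        simp only [Function.comp_def, tcnj_tcnj]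
        congr 1
        · apply congrArg List.prod
          apply List.map_congr_left
          intro i hi
          have hi' := List.mem_range.mp hi
          congr 1
          omega
        · have : k + 1 - k = 1 := by omega
          simp [this]
      have hD : tD h R a b (k + 1) = tcnj R 1 (tD h R a b k) * tQ h a b k := by
        rw [tD, List.range_succ, List.map_append, List.prod_append, tD_conj]
        congr 1
        · apply congrArg List.prod
          apply List.map_congr_left
          intro j hj
          have hj' := List.mem_range.mp hj
          congr 1
          omega
        · have : k + 1 - 1 - k = 0 := by omega
          simp [this, tcnj_zero]
      have hQ : tQ h a b k = tQ h a b (k - 1) * ⁅tA h a k, tA h b k⁆ := by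
        rw [tQ, tQ]
        have : k - 1 + 1 = k := by omega
        rw [this, List.range_succ, List.map_append, List.prod_append]
        simp
      have hW1 : Commute (tcnj R 1 (tQ h a b (k - 1))) (tcnj R 1 (tD h R a b k)) := by
        rw [tD_conj]
        apply Commute.list_prod_right
        intro z hz
        obtain ⟨j, hj, rfl⟩ := List.mem_map.mp hz
        have hj' := List.mem_range.mp hj
        by_cases hjk : j = k - 1
        · subst hjk
          have : 1 + (k - 1 - (k - 1)) = 1 := by omega
          rw [this]
        · apply commQ hcomm
          apply not_dvd_small
          · push_cast; omega
          · push_cast; omega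
      have hW2 : Commute (tcnj R 1 (tQ h a b (k - 1))) (tcnj R 2 (tD h R a b k)) := by
        rw [tD_conj]
        apply Commute.list_prod_right
        intro z hz
        obtain ⟨j, hj, rfl⟩ := List.mem_map.mp hz
        have hj' := List.mem_range.mp hj
        apply commQ hcomm
        apply not_dvd_small
        · push_cast; omega
        · push_cast; omega
      have hW : Commute (tcnj R 1 (tQ h a b (k - 1)))
          ((tcnj R 1 (tD h R a b k))⁻¹ * tcnj R 2 (tD h R a b k)) :=
        hW1.inv_right.mul_right hW2
      have h2 : (1 : ℕ) + 1 = 2 := rfl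
      calc tE h R a b (k + 1)
          = tcnj R 1 (tQ h a b (k - 1) * (tD h R a b k)⁻¹ * tcnj R 1 (tD h R a b k)) *
              tcnj R 1 ⁅tA h a k, tA h b k⁆ := by rw [hE, ihk]
        _ = tcnj R 1 (tQ h a b (k - 1)) *
              ((tcnj R 1 (tD h R a b k))⁻¹ * tcnj R 2 (tD h R a b k)) *
              tcnj R 1 ⁅tA h a k, tA h b k⁆ := by
            rw [tcnj_mul, tcnj_mul, tcnj_inv, tcnj_tcnj, h2]; group
        _ = ((tcnj R 1 (tD h R a b k))⁻¹ * tcnj R 2 (tD h R a b k)) *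
              tcnj R 1 (tQ h a b (k - 1)) * tcnj R 1 ⁅tA h a k, tA h b k⁆ := by
            rw [hW.eq]
        _ = tQ h a b (k + 1 - 1) * (tD h R a b (k + 1))⁻¹ * tcnj R 1 (tD h R a b (k + 1)) := by
            have hk1' : k + 1 - 1 = k := by omega
            rw [hk1', hD, hQ, tcnj_mul, tcnj_tcnj, h2, tcnj_mul]
            group

end TsuboiAux

theorem tsuboi_two_commutator {G : Type*} [Group G] (h : ℕ) (hh : 1 ≤ h)
    (R : G) (a b : Fin h → G)
    (hcomm : ∀ (i j : Fin h) (p q : ℤ), ¬ ((h : ℤ) ∣ (p - q)) →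
      (Commute (R ^ p * a i * (R ^ p)⁻¹) (R ^ q * a j * (R ^ q)⁻¹) ∧
       Commute (R ^ p * a i * (R ^ p)⁻¹) (R ^ q * b j * (R ^ q)⁻¹) ∧
       Commute (R ^ p * b i * (R ^ p)⁻¹) (R ^ q * a j * (R ^ q)⁻¹) ∧
       Commute (R ^ p * b i * (R ^ p)⁻¹) (R ^ q * b j * (R ^ q)⁻¹)))
    (hR : ∀ i : Fin h, Commute (R ^ h) (a i) ∧ Commute (R ^ h) (b i)) :
    (List.ofFn fun i => ⁅a i, b i⁆).prod =
      ⁅(List.ofFn fun j : Fin h => R ^ (h - j.val) * a j * (R ^ (h - j.val))⁻¹).prod,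
        (List.ofFn fun j : Fin h => R ^ (h - j.val) * b j * (R ^ (h - j.val))⁻¹).prod⁆ *
      ⁅R, ((List.ofFn fun j : Fin h =>
          (List.ofFn fun k : Fin (j.val + 1) =>
            R ^ (h - 1 - j.val) * ⁅a (Fin.castLE j.isLt k), b (Fin.castLE j.isLt k)⁆ *
              (R ^ (h - 1 - j.val))⁻¹).prod).prod)⁻¹⁆ := by
  clear hR
  -- rewrite A
  have hA : (List.ofFn fun j : Fin h => R ^ (h - j.val) * a j * (R ^ (h - j.val))⁻¹) =
      (List.range h).map (fun n => tcnj R (h - n) (tA h a n)) := by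
    rw [← ofFn_val]
    congr 1
    funext j
    simp [tcnj, tA, j.isLt]
  have hB : (List.ofFn fun j : Fin h => R ^ (h - j.val) * b j * (R ^ (h - j.val))⁻¹) =
      (List.range h).map (fun n => tcnj R (h - n) (tA h b n)) := by
    rw [← ofFn_val]
    congr 1
    funext j
    simp [tcnj, tA, j.isLt]
  -- rewrite LHS
  have hL : (List.ofFn fun i => ⁅a i, b i⁆) =
      (List.range h).map (fun n => ⁅tA h a n, tA h b n⁆) := by
    rw [← ofFn_val]
    congr 1
    funext j
    simp [tA, j.isLt]
  have hLQ : ((List.range h).map (fun n => ⁅tA h a n, tA h b n⁆)).prod = tQ h a b (h - 1) := by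
    have e : h - 1 + 1 = h := by omega
    rw [tQ, e]
  -- rewrite P
  have hP : (List.ofFn fun j : Fin h =>
      (List.ofFn fun k : Fin (j.val + 1) =>
        R ^ (h - 1 - j.val) * ⁅a (Fin.castLE j.isLt k), b (Fin.castLE j.isLt k)⁆ *
          (R ^ (h - 1 - j.val))⁻¹).prod) =
      (List.range h).map (fun n => tcnj R (h - 1 - n) (tQ h a b n)) := by
    rw [← ofFn_val]
    congr 1
    funext j
    rw [tQ, tcnj_prod, List.map_map]
    rw [← ofFn_val (fun n => (tcnj R (h - 1 - j.val) ∘ fun k => ⁅tA h a k, tA h b k⁆) n)]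
    refine congrArg List.prod (congrArg List.ofFn ?_)
    funext k
    have hkh : k.val < h := by have := j.isLt; have := k.isLt; omega
    simp [tcnj, tA, hkh, Fin.castLE]
  rw [hA, hB, hL, hLQ, hP]
  -- the commutator of the two big products
  have hstep1 : ⁅((List.range h).map (fun n => tcnj R (h - n) (tA h a n))).prod,
      ((List.range h).map (fun n => tcnj R (h - n) (tA h b n))).prod⁆ = tE h R a b h := by
    rw [key_prod h _ _ ?hc]
    · rw [tE]
      apply congrArg List.prod
      apply List.map_congr_left
      intro i _
      rw [tcnj_commutator]
    case hc =>
      intro i hi j hj hij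
      have hdvd : ¬ ((h : ℤ) ∣ ((h - i : ℕ) : ℤ) - ((h - j : ℕ) : ℤ)) := by
        apply not_dvd_small
        · omega
        · omega
      obtain ⟨c1, c2, c3, c4⟩ := commBase hcomm (h - i) (h - j) hdvd i j
      exact ⟨c1, c2, c4⟩
  rw [hstep1]
  -- the second commutator
  have hP2 : ((List.range h).map (fun n => tcnj R (h - 1 - n) (tQ h a b n))).prod =
      tD h R a b h := by rw [tD]
  rw [hP2]
  have hcom2 : ⁅R, (tD h R a b h)⁻¹⁆ = (tcnj R 1 (tD h R a b h))⁻¹ * tD h R a b h := by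
    simp only [commutatorElement_def, tcnj, pow_one]
    group
  rw [hcom2, tsuboi_key hcomm h hh (le_refl h)]
  group
end

section
/- Let G be a group, h ≥ 1 an integer, R ∈ G, and a_1,…,a_h, b_1,…,b_h ∈ G satisfying the Tsuboi hypotheses: (1) for all i, j and all integers p ≢ q (mod h), the conjugates R^p a_i R^{-p}, R^p b_i R^{-p} commute with R^q a_j R^{-q}, R^q b_j R^{-q}; and (2) R^h commutes with every a_i and b_i. Then there exist elements A', B' ∈ G and Q ∈ G such that ∏_{i=1}^h [a_i, b_i] = [Q, R] · [B', A'], where Q := ∏_{i=0}^{h-1} (C_1^{R^{i}} ⋯ C_{h-i}^{R^{i}}) with C_i := [a_i, b_i]. -/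
open scoped commutatorElement

namespace TsuboiAux

variable {G : Type*} [Group G]

def cj (g x : G) : G := g * x * g⁻¹

@[simp] lemma cj_def (g x : G) : cj g x = g * x * g⁻¹ := rfl

lemma cj_mul (g x y : G) : cj g (x * y) = cj g x * cj g y := by
  simp [cj, mul_assoc]

lemma cj_inv (g x : G) : cj g x⁻¹ = (cj g x)⁻¹ := by
  simp [cj, mul_assoc]

@[simp] lemma cj_one_right (g : G) : cj g (1 : G) = 1 := by simp [cj]

@[simp] lemma cj_one_left (x : G) : cj (1 : G) x = x := by simp [cj]

lemma cj_cj (g g' x : G) : cj g (cj g' x) = cj (g * g') x := by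
  simp [cj, mul_assoc]

lemma cj_commutator (g x y : G) : cj g ⁅x, y⁆ = ⁅cj g x, cj g y⁆ := by
  simp [cj, commutatorElement_def, mul_assoc]

lemma cj_eq_of_commute {g x : G} (hc : Commute g x) : cj g x = x := by
  rw [cj_def, hc.eq, mul_inv_cancel_right]

def pr (f : ℕ → G) (n : ℕ) : G := ((List.range n).map f).prod

def rp (f : ℕ → G) (n : ℕ) : G := pr (fun k => f (n - 1 - k)) n

@[simp] lemma pr_zero (f : ℕ → G) : pr f 0 = 1 := rfl

lemma pr_succ (f : ℕ → G) (n : ℕ) : pr f (n + 1) = pr f n * f n := by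
  simp [pr, List.range_succ]

lemma pr_succ' (f : ℕ → G) (n : ℕ) :
    pr f (n + 1) = f 0 * pr (fun k => f (k + 1)) n := by
  simp [pr, List.range_succ_eq_map, List.map_map, Function.comp_def]

lemma pr_congr {f g : ℕ → G} {n : ℕ} (hfg : ∀ k, k < n → f k = g k) :
    pr f n = pr g n := by
  unfold pr
  congr 1
  apply List.map_congr_left
  intro k hk
  exact hfg k (List.mem_range.mp hk)

@[simp] lemma rp_zero (f : ℕ → G) : rp f 0 = 1 := rfl

lemma rp_succ (f : ℕ → G) (n : ℕ) : rp f (n + 1) = f n * rp f n := by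
  simp only [rp, pr_succ', Nat.add_sub_cancel, Nat.sub_zero]
  congr 1
  apply pr_congr
  intro k hk
  congr 1
  omega

lemma rp_succ' (f : ℕ → G) (n : ℕ) :
    rp f (n + 1) = rp (fun k => f (k + 1)) n * f 0 := by
  simp only [rp, pr_succ, Nat.add_sub_cancel, Nat.sub_self]
  congr 1
  apply pr_congr
  intro k hk
  congr 1
  omega

lemma inv_pr (f : ℕ → G) (n : ℕ) : (pr f n)⁻¹ = rp (fun k => (f k)⁻¹) n := by
  induction n with
  | zero => simp
  | succ n ih => rw [pr_succ, mul_inv_rev, ih, rp_succ]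

lemma cj_pr (g : G) (f : ℕ → G) (n : ℕ) :
    cj g (pr f n) = pr (fun k => cj g (f k)) n := by
  induction n with
  | zero => simp
  | succ n ih => rw [pr_succ, pr_succ, cj_mul, ih]

lemma ofFn_eq_pr : ∀ (n : ℕ) (f : Fin n → G) (g : ℕ → G),
    (∀ i : Fin n, f i = g i.val) → (List.ofFn f).prod = pr g n
  | 0, f, g, _ => by simp
  | n + 1, f, g, hfg => by
    rw [List.ofFn_succ, List.prod_cons, pr_succ']
    have h0 : f 0 = g 0 := hfg 0
    rw [h0]
    congr 1
    exact ofFn_eq_pr n (fun i => f i.succ) (fun k => g (k + 1))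
      (fun i => by show f i.succ = g (i.val + 1); rw [hfg i.succ, Fin.val_succ])

lemma commute_commutator {g x y : G} (h1 : Commute g x) (h2 : Commute g y) :
    Commute g ⁅x, y⁆ := by
  rw [commutatorElement_def]
  exact ((h1.mul_right h2).mul_right h1.inv_right).mul_right h2.inv_right

lemma comm_split (P x Q y : G) (h1 : Commute x P) (h2 : Commute x Q)
    (h3 : Commute y P) (h4 : Commute y Q) :
    ⁅P * x, Q * y⁆ = ⁅P, Q⁆ * ⁅x, y⁆ := by
  have hc : Commute ⁅x, y⁆ Q⁻¹ :=
    ((commute_commutator h2.symm h4.symm).symm).inv_right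
  have h5 : Commute (x * y * x⁻¹) P⁻¹ :=
    ((h1.mul_left h3).mul_left h1.inv_left).inv_right
  calc ⁅P * x, Q * y⁆ = P * (x * Q) * y * x⁻¹ * P⁻¹ * y⁻¹ * Q⁻¹ := by
        simp only [commutatorElement_def, mul_inv_rev, mul_assoc]
    _ = P * (Q * x) * y * x⁻¹ * P⁻¹ * y⁻¹ * Q⁻¹ := by rw [h2.eq]
    _ = (P * Q) * ((x * y * x⁻¹) * P⁻¹) * (y⁻¹ * Q⁻¹) := by simp [mul_assoc]
    _ = (P * Q) * (P⁻¹ * (x * y * x⁻¹)) * (y⁻¹ * Q⁻¹) := by rw [h5.eq]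
    _ = (P * Q * P⁻¹) * (⁅x, y⁆ * Q⁻¹) := by
        simp only [commutatorElement_def, mul_inv_rev, mul_assoc]
    _ = (P * Q * P⁻¹) * (Q⁻¹ * ⁅x, y⁆) := by rw [hc.eq]
    _ = ⁅P, Q⁆ * ⁅x, y⁆ := by
        simp only [commutatorElement_def, mul_inv_rev, mul_assoc]

lemma commute_pr {g : G} {f : ℕ → G} {n : ℕ} (hf : ∀ i, i < n → Commute g (f i)) :
    Commute g (pr f n) := by
  apply Commute.list_prod_right
  intro x hx
  rw [List.mem_map] at hx
  obtain ⟨i, hi, rfl⟩ := hx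
  exact hf i (List.mem_range.mp hi)

lemma commutator_prod (x y : ℕ → G) : ∀ (n : ℕ),
    (∀ i j, i < n → j < n → i ≠ j →
      Commute (x i) (x j) ∧ Commute (x i) (y j) ∧
      Commute (y i) (x j) ∧ Commute (y i) (y j)) →
    pr (fun k => ⁅x k, y k⁆) n = ⁅pr x n, pr y n⁆
  | 0, _ => by simp [commutatorElement_def]
  | n + 1, H => by
    have hxx : Commute (x n) (pr x n) :=
      commute_pr (fun i hi => (H n i n.lt_succ_self (Nat.lt_succ_of_lt hi) (by omega)).1)
    have hxy : Commute (x n) (pr y n) :=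
      commute_pr (fun i hi => (H n i n.lt_succ_self (Nat.lt_succ_of_lt hi) (by omega)).2.1)
    have hyx : Commute (y n) (pr x n) :=
      commute_pr (fun i hi => (H n i n.lt_succ_self (Nat.lt_succ_of_lt hi) (by omega)).2.2.1)
    have hyy : Commute (y n) (pr y n) :=
      commute_pr (fun i hi => (H n i n.lt_succ_self (Nat.lt_succ_of_lt hi) (by omega)).2.2.2)
    rw [pr_succ, pr_succ x, pr_succ y,
      comm_split (pr x n) (x n) (pr y n) (y n) hxx hxy hyx hyy,
      commutator_prod x y n (fun i j hi hj hne =>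
        H i j (Nat.lt_succ_of_lt hi) (Nat.lt_succ_of_lt hj) hne)]

lemma sandwich (u v e : ℕ → G) : ∀ (n : ℕ) (z : G),
    (∀ i, i < n → Commute z (u i) ∧ Commute z (v i)) →
    (∀ i, i < n → u i * v i = e i) →
    (∀ i j, i < n → j < n → i ≠ j → Commute (e i) (u j) ∧ Commute (e i) (v j)) →
    pr u n * (z * rp v n) = z * rp e n
  | 0, z, _, _, _ => by simp
  | n + 1, z, hz, huv, he => by
    rw [pr_succ, rp_succ, rp_succ]
    have hmid : u n * z * v n = z * e n := by
      rw [((hz n n.lt_succ_self).1.symm).eq, mul_assoc, huv n n.lt_succ_self]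
    calc pr u n * u n * (z * (v n * rp v n))
        = pr u n * ((u n * z * v n) * rp v n) := by simp [mul_assoc]
      _ = pr u n * ((z * e n) * rp v n) := by rw [hmid]
      _ = (z * e n) * rp e n :=
          sandwich u v e n (z * e n)
            (fun i hi => ⟨Commute.mul_left (hz i (Nat.lt_succ_of_lt hi)).1
                ((he n i n.lt_succ_self (Nat.lt_succ_of_lt hi) (by omega)).1),
              Commute.mul_left (hz i (Nat.lt_succ_of_lt hi)).2
                ((he n i n.lt_succ_self (Nat.lt_succ_of_lt hi) (by omega)).2)⟩)
            (fun i hi => huv i (Nat.lt_succ_of_lt hi))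
            (fun i j hi hj hne =>
              he i j (Nat.lt_succ_of_lt hi) (Nat.lt_succ_of_lt hj) hne)
      _ = z * (e n * rp e n) := by rw [mul_assoc]


section CommLemmas

variable {R : G} {A B : ℕ → G} {h : ℕ}

lemma commute_cj_closure
    (hcomm : ∀ (k l : ℕ) (p q : ℤ), ¬ ((h : ℤ) ∣ (p - q)) →
      (Commute (cj (R ^ p) (A k)) (cj (R ^ q) (A l)) ∧
       Commute (cj (R ^ p) (A k)) (cj (R ^ q) (B l)) ∧
       Commute (cj (R ^ p) (B k)) (cj (R ^ q) (A l)) ∧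
       Commute (cj (R ^ p) (B k)) (cj (R ^ q) (B l))))
    (p q : ℤ) (hpq : ¬ ((h : ℤ) ∣ (p - q))) :
    ∀ w ∈ Subgroup.closure (Set.range A ∪ Set.range B),
      ∀ w' ∈ Subgroup.closure (Set.range A ∪ Set.range B),
        Commute (cj (R ^ p) w) (cj (R ^ q) w') := by
  have step : ∀ w ∈ Subgroup.closure (Set.range A ∪ Set.range B),
      ∀ x' ∈ (Set.range A ∪ Set.range B), Commute (cj (R ^ p) w) (cj (R ^ q) x') := by
    intro w hw
    induction hw using Subgroup.closure_induction with
    | mem x hx =>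
        intro x' hx'
        rcases hx with ⟨k, rfl⟩ | ⟨k, rfl⟩ <;> rcases hx' with ⟨l, rfl⟩ | ⟨l, rfl⟩
        · exact (hcomm k l p q hpq).1
        · exact (hcomm k l p q hpq).2.1
        · exact (hcomm k l p q hpq).2.2.1
        · exact (hcomm k l p q hpq).2.2.2
    | one => intro x' _; rw [cj_one_right]; exact Commute.one_left _
    | mul x y hx hy ihx ihy =>
        intro x' hx'; rw [cj_mul]; exact (ihx x' hx').mul_left (ihy x' hx')
    | inv x hx ihx => intro x' hx'; rw [cj_inv]; exact (ihx x' hx').inv_left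
  intro w hw w' hw'
  induction hw' using Subgroup.closure_induction with
  | mem x hx => exact step w hw x hx
  | one => rw [cj_one_right]; exact Commute.one_right _
  | mul x y hx hy ihx ihy => rw [cj_mul]; exact ihx.mul_right ihy
  | inv x hx ihx => rw [cj_inv]; exact ihx.inv_right

lemma commute_cj_nat
    (hcomm : ∀ (k l : ℕ) (p q : ℤ), ¬ ((h : ℤ) ∣ (p - q)) →
      (Commute (cj (R ^ p) (A k)) (cj (R ^ q) (A l)) ∧
       Commute (cj (R ^ p) (A k)) (cj (R ^ q) (B l)) ∧
       Commute (cj (R ^ p) (B k)) (cj (R ^ q) (A l)) ∧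
       Commute (cj (R ^ p) (B k)) (cj (R ^ q) (B l))))
    (p q : ℕ) (hne : p ≠ q) (hb1 : p < q + h) (hb2 : q < p + h) :
    ∀ w ∈ Subgroup.closure (Set.range A ∪ Set.range B),
      ∀ w' ∈ Subgroup.closure (Set.range A ∪ Set.range B),
        Commute (cj (R ^ p) w) (cj (R ^ q) w') := by
  intro w hw w' hw'
  have hdvd : ¬ ((h : ℤ) ∣ ((p : ℤ) - (q : ℤ))) := by
    intro hd
    have hz : ((p : ℤ) - (q : ℤ)) ≠ 0 := by omega
    have h3 : (h : ℤ) ≤ |(p : ℤ) - (q : ℤ)| :=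
      Int.le_of_dvd (abs_pos.mpr hz) ((dvd_abs _ _).mpr hd)
    have h4 : |(p : ℤ) - (q : ℤ)| < (h : ℤ) := abs_lt.mpr (by omega)
    exact absurd (lt_of_le_of_lt h3 h4) (lt_irrefl _)
  have := commute_cj_closure hcomm (p : ℤ) (q : ℤ) hdvd w hw w' hw'
  simpa [zpow_natCast] using this

lemma commute_pow_closure
    (hRab : ∀ k, Commute (R ^ h) (A k) ∧ Commute (R ^ h) (B k)) :
    ∀ w ∈ Subgroup.closure (Set.range A ∪ Set.range B), Commute (R ^ h) w := by
  intro w hw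
  induction hw using Subgroup.closure_induction with
  | mem x hx => rcases hx with ⟨k, rfl⟩ | ⟨k, rfl⟩
                · exact (hRab k).1
                · exact (hRab k).2
  | one => exact Commute.one_right _
  | mul x y hx hy ihx ihy => exact ihx.mul_right ihy
  | inv x hx ihx => exact ihx.inv_right

end CommLemmas

lemma rp_congr {f g : ℕ → G} {n : ℕ} (hfg : ∀ k, k < n → f k = g k) :
    rp f n = rp g n := by
  unfold rp
  exact pr_congr (fun k hk => hfg _ (by omega))

lemma main_aux (h : ℕ) (hh : 1 ≤ h) (R : G) (A B : ℕ → G)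
    (hcomm : ∀ (k l : ℕ) (p q : ℤ), ¬ ((h : ℤ) ∣ (p - q)) →
      (Commute (cj (R ^ p) (A k)) (cj (R ^ q) (A l)) ∧
       Commute (cj (R ^ p) (A k)) (cj (R ^ q) (B l)) ∧
       Commute (cj (R ^ p) (B k)) (cj (R ^ q) (A l)) ∧
       Commute (cj (R ^ p) (B k)) (cj (R ^ q) (B l))))
    (hRab : ∀ k, Commute (R ^ h) (A k) ∧ Commute (R ^ h) (B k)) :
    ∃ X Y : G,
      pr (fun k => ⁅A k, B k⁆) h =
        ⁅pr (fun i => cj (R ^ i) (pr (fun k => ⁅A k, B k⁆) (h - i))) h, R⁆ * ⁅X, Y⁆ := by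
  obtain ⟨m, rfl⟩ : ∃ m, h = m + 1 := ⟨h - 1, by omega⟩
  set c : ℕ → G := fun k => ⁅A k, B k⁆ with hcdef
  have hck : ∀ k, c k = ⁅A k, B k⁆ := fun _ => rfl
  have memA : ∀ k, A k ∈ Subgroup.closure (Set.range A ∪ Set.range B) :=
    fun k => Subgroup.subset_closure (Or.inl ⟨k, rfl⟩)
  have memB : ∀ k, B k ∈ Subgroup.closure (Set.range A ∪ Set.range B) :=
    fun k => Subgroup.subset_closure (Or.inr ⟨k, rfl⟩)
  have memc : ∀ k, c k ∈ Subgroup.closure (Set.range A ∪ Set.range B) := by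
    intro k
    rw [hck, commutatorElement_def]
    exact mul_mem (mul_mem (mul_mem (memA k) (memB k)) (inv_mem (memA k)))
      (inv_mem (memB k))
  have memd : ∀ n, pr c n ∈ Subgroup.closure (Set.range A ∪ Set.range B) := by
    intro n
    induction n with
    | zero => simpa using one_mem _
    | succ n ih => rw [pr_succ]; exact mul_mem ih (memc n)
  have natC := commute_cj_nat hcomm
  have hRc := commute_pow_closure hRab
  have hd1 : pr c 1 = c 0 := by simpa using pr_succ c 0
  have hc0fix : cj (R ^ (m + 1)) (c 0) = c 0 := cj_eq_of_commute (hRc _ (memc 0))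
  -- step 1 : R Q R⁻¹
  have hstep1 : cj R (pr (fun i => cj (R ^ i) (pr c (m + 1 - i))) (m + 1)) =
      pr (fun j => cj (R ^ (j + 1)) (pr c (m + 1 - j))) m * c 0 := by
    rw [cj_pr, pr_succ]
    congr 1
    · apply pr_congr
      intro k hk
      show cj R (cj (R ^ k) (pr c (m + 1 - k))) = cj (R ^ (k + 1)) (pr c (m + 1 - k))
      rw [cj_cj, ← pow_succ']
    · show cj R (cj (R ^ m) (pr c (m + 1 - m))) = c 0
      rw [cj_cj, ← pow_succ', show m + 1 - m = 1 by omega, hd1, hc0fix]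
  -- step 2 : Q⁻¹
  have hstep2 : (pr (fun i => cj (R ^ i) (pr c (m + 1 - i))) (m + 1))⁻¹ =
      rp (fun j => (cj (R ^ (j + 1)) (pr c (m + 1 - (j + 1))))⁻¹) m *
        (pr c (m + 1))⁻¹ := by
    rw [inv_pr, rp_succ']
    congr 1
    rw [pow_zero, cj_one_left, Nat.sub_zero]
  -- step 3 : sandwich
  have hz' : ∀ i, i < m →
      Commute (c 0) (cj (R ^ (i + 1)) (pr c (m + 1 - i))) ∧
      Commute (c 0) ((cj (R ^ (i + 1)) (pr c (m + 1 - (i + 1))))⁻¹) := by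
    intro i hi
    have h1 : Commute (cj (R ^ (m + 1)) (c 0)) (cj (R ^ (i + 1)) (pr c (m + 1 - i))) :=
      natC (m + 1) (i + 1) (by omega) (by omega) (by omega) _ (memc 0) _ (memd _)
    have h2 : Commute (cj (R ^ (m + 1)) (c 0))
        (cj (R ^ (i + 1)) (pr c (m + 1 - (i + 1)))) :=
      natC (m + 1) (i + 1) (by omega) (by omega) (by omega) _ (memc 0) _ (memd _)
    rw [hc0fix] at h1 h2
    exact ⟨h1, h2.inv_right⟩
  have huv' : ∀ i, i < m →
      cj (R ^ (i + 1)) (pr c (m + 1 - i)) *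
        (cj (R ^ (i + 1)) (pr c (m + 1 - (i + 1))))⁻¹ =
      cj (R ^ (i + 1)) (cj (pr c (m - i)) (c (m - i))) := by
    intro i hi
    have e1 : m + 1 - (i + 1) = m - i := by omega
    have e2 : m + 1 - i = (m - i) + 1 := by omega
    rw [e1, e2, pr_succ, ← cj_inv, ← cj_mul]
    rw [cj_def (pr c (m - i)) (c (m - i))]
  have memcj : ∀ k, cj (pr c k) (c k) ∈ Subgroup.closure (Set.range A ∪ Set.range B) := by
    intro k
    rw [cj_def]
    exact mul_mem (mul_mem (memd k) (memc k)) (inv_mem (memd k))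
  have he' : ∀ i j, i < m → j < m → i ≠ j →
      Commute (cj (R ^ (i + 1)) (cj (pr c (m - i)) (c (m - i))))
        (cj (R ^ (j + 1)) (pr c (m + 1 - j))) ∧
      Commute (cj (R ^ (i + 1)) (cj (pr c (m - i)) (c (m - i))))
        ((cj (R ^ (j + 1)) (pr c (m + 1 - (j + 1))))⁻¹) := by
    intro i j hi hj hne
    have h1 := natC (i + 1) (j + 1) (by omega) (by omega) (by omega) _ (memcj (m - i))
      _ (memd (m + 1 - j))
    have h2 := natC (i + 1) (j + 1) (by omega) (by omega) (by omega) _ (memcj (m - i))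
      _ (memd (m + 1 - (j + 1)))
    exact ⟨h1, h2.inv_right⟩
  have hstep3 := sandwich (fun j => cj (R ^ (j + 1)) (pr c (m + 1 - j)))
    (fun j => (cj (R ^ (j + 1)) (pr c (m + 1 - (j + 1))))⁻¹)
    (fun j => cj (R ^ (j + 1)) (cj (pr c (m - j)) (c (m - j)))) m (c 0) hz' huv' he'
  -- step 4 : commutator product
  have memX : ∀ k, cj (pr c k) (A k) ∈ Subgroup.closure (Set.range A ∪ Set.range B) := by
    intro k
    rw [cj_def]
    exact mul_mem (mul_mem (memd k) (memA k)) (inv_mem (memd k))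
  have memY : ∀ k, cj (pr c k) (B k) ∈ Subgroup.closure (Set.range A ∪ Set.range B) := by
    intro k
    rw [cj_def]
    exact mul_mem (mul_mem (memd k) (memB k)) (inv_mem (memd k))
  have hcomm4 : ∀ i j, i < m + 1 → j < m + 1 → i ≠ j →
      Commute (cj (R ^ (m + 1 - i)) (cj (pr c i) (A i)))
        (cj (R ^ (m + 1 - j)) (cj (pr c j) (A j))) ∧
      Commute (cj (R ^ (m + 1 - i)) (cj (pr c i) (A i)))
        (cj (R ^ (m + 1 - j)) (cj (pr c j) (B j))) ∧
      Commute (cj (R ^ (m + 1 - i)) (cj (pr c i) (B i)))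
        (cj (R ^ (m + 1 - j)) (cj (pr c j) (A j))) ∧
      Commute (cj (R ^ (m + 1 - i)) (cj (pr c i) (B i)))
        (cj (R ^ (m + 1 - j)) (cj (pr c j) (B j))) := by
    intro i j hi hj hne
    exact ⟨natC (m + 1 - i) (m + 1 - j) (by omega) (by omega) (by omega) _ (memX i) _ (memX j),
      natC (m + 1 - i) (m + 1 - j) (by omega) (by omega) (by omega) _ (memX i) _ (memY j),
      natC (m + 1 - i) (m + 1 - j) (by omega) (by omega) (by omega) _ (memY i) _ (memX j),
      natC (m + 1 - i) (m + 1 - j) (by omega) (by omega) (by omega) _ (memY i) _ (memY j)⟩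
  have hstep4b : pr (fun k => ⁅cj (R ^ (m + 1 - k)) (cj (pr c k) (A k)),
      cj (R ^ (m + 1 - k)) (cj (pr c k) (B k))⁆) (m + 1) =
      c 0 * rp (fun j => cj (R ^ (j + 1)) (cj (pr c (m - j)) (c (m - j)))) m := by
    have hpt : ∀ k, ⁅cj (R ^ (m + 1 - k)) (cj (pr c k) (A k)),
        cj (R ^ (m + 1 - k)) (cj (pr c k) (B k))⁆ =
        cj (R ^ (m + 1 - k)) (cj (pr c k) (c k)) := by
      intro k
      rw [← cj_commutator, ← cj_commutator, hck k]
    calc pr (fun k => ⁅cj (R ^ (m + 1 - k)) (cj (pr c k) (A k)),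
            cj (R ^ (m + 1 - k)) (cj (pr c k) (B k))⁆) (m + 1)
        = pr (fun k => cj (R ^ (m + 1 - k)) (cj (pr c k) (c k))) (m + 1) :=
          pr_congr (fun k _ => hpt k)
      _ = c 0 * rp (fun j => cj (R ^ (j + 1)) (cj (pr c (m - j)) (c (m - j)))) m := by
          rw [pr_succ']
          congr 1
          · show cj (R ^ (m + 1 - 0)) (cj (pr c 0) (c 0)) = c 0
            rw [Nat.sub_zero, pr_zero, cj_one_left, hc0fix]
          · show pr (fun k => cj (R ^ (m + 1 - (k + 1))) (cj (pr c (k + 1)) (c (k + 1)))) m =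
              rp (fun j => cj (R ^ (j + 1)) (cj (pr c (m - j)) (c (m - j)))) m
            unfold rp
            apply pr_congr
            intro k hk
            have e1 : m + 1 - (k + 1) = (m - 1 - k) + 1 := by omega
            have e2 : m - (m - 1 - k) = k + 1 := by omega
            show cj (R ^ (m + 1 - (k + 1))) (cj (pr c (k + 1)) (c (k + 1))) =
              cj (R ^ ((m - 1 - k) + 1)) (cj (pr c (m - (m - 1 - k))) (c (m - (m - 1 - k))))
            rw [e1, e2]
  -- assemble
  refine ⟨pr (fun k => cj (R ^ (m + 1 - k)) (cj (pr c k) (A k))) (m + 1),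
          pr (fun k => cj (R ^ (m + 1 - k)) (cj (pr c k) (B k))) (m + 1), ?_⟩
  have key : ⁅pr (fun k => cj (R ^ (m + 1 - k)) (cj (pr c k) (A k))) (m + 1),
      pr (fun k => cj (R ^ (m + 1 - k)) (cj (pr c k) (B k))) (m + 1)⁆ =
      cj R (pr (fun i => cj (R ^ i) (pr c (m + 1 - i))) (m + 1)) *
        ((pr (fun i => cj (R ^ i) (pr c (m + 1 - i))) (m + 1))⁻¹ * pr c (m + 1)) := by
    calc ⁅pr (fun k => cj (R ^ (m + 1 - k)) (cj (pr c k) (A k))) (m + 1),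
          pr (fun k => cj (R ^ (m + 1 - k)) (cj (pr c k) (B k))) (m + 1)⁆
        = c 0 * rp (fun j => cj (R ^ (j + 1)) (cj (pr c (m - j)) (c (m - j)))) m := by
          rw [← commutator_prod (fun k => cj (R ^ (m + 1 - k)) (cj (pr c k) (A k)))
            (fun k => cj (R ^ (m + 1 - k)) (cj (pr c k) (B k))) (m + 1) hcomm4]
          exact hstep4b
      _ = pr (fun j => cj (R ^ (j + 1)) (pr c (m + 1 - j))) m *
            (c 0 * rp (fun j => (cj (R ^ (j + 1)) (pr c (m + 1 - (j + 1))))⁻¹) m) :=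
          hstep3.symm
      _ = (pr (fun j => cj (R ^ (j + 1)) (pr c (m + 1 - j))) m * c 0) *
            ((rp (fun j => (cj (R ^ (j + 1)) (pr c (m + 1 - (j + 1))))⁻¹) m *
              (pr c (m + 1))⁻¹) * pr c (m + 1)) := by
          simp [mul_assoc]
      _ = cj R (pr (fun i => cj (R ^ i) (pr c (m + 1 - i))) (m + 1)) *
            ((pr (fun i => cj (R ^ i) (pr c (m + 1 - i))) (m + 1))⁻¹ * pr c (m + 1)) := by
          rw [hstep1, hstep2]
  rw [key, commutatorElement_def, cj_def]
  group

end TsuboiAux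

open TsuboiAux

theorem tsuboi_variation {G : Type*} [Group G] (h : ℕ) (hh : 1 ≤ h)
    (R : G) (a b : Fin h → G)
    (hcomm : ∀ (i j : Fin h) (p q : ℤ), ¬ ((h : ℤ) ∣ (p - q)) →
      (Commute (R ^ p * a i * (R ^ p)⁻¹) (R ^ q * a j * (R ^ q)⁻¹) ∧
       Commute (R ^ p * a i * (R ^ p)⁻¹) (R ^ q * b j * (R ^ q)⁻¹) ∧
       Commute (R ^ p * b i * (R ^ p)⁻¹) (R ^ q * a j * (R ^ q)⁻¹) ∧
       Commute (R ^ p * b i * (R ^ p)⁻¹) (R ^ q * b j * (R ^ q)⁻¹)))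
    (hR : ∀ i : Fin h, Commute (R ^ h) (a i) ∧ Commute (R ^ h) (b i)) :
    ∃ A' B' : G,
      (List.ofFn fun i => ⁅a i, b i⁆).prod =
        ⁅(List.ofFn fun i : Fin h =>
            (List.ofFn fun k : Fin (h - i.val) =>
              R ^ i.val *
                ⁅a ⟨k.val, lt_of_lt_of_le k.isLt (Nat.sub_le h i.val)⟩,
                 b ⟨k.val, lt_of_lt_of_le k.isLt (Nat.sub_le h i.val)⟩⁆ *
                (R ^ i.val)⁻¹).prod).prod, R⁆ * ⁅B', A'⁆ := by
  classical
  set A : ℕ → G := fun k => if hk : k < h then a ⟨k, hk⟩ else 1 with hAdef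
  set B : ℕ → G := fun k => if hk : k < h then b ⟨k, hk⟩ else 1 with hBdef
  have hAa : ∀ (k : ℕ) (hk : k < h), A k = a ⟨k, hk⟩ := fun k hk => dif_pos hk
  have hBa : ∀ (k : ℕ) (hk : k < h), B k = b ⟨k, hk⟩ := fun k hk => dif_pos hk
  have hA1 : ∀ (k : ℕ), h ≤ k → A k = 1 := fun k hk => dif_neg (by omega)
  have hB1 : ∀ (k : ℕ), h ≤ k → B k = 1 := fun k hk => dif_neg (by omega)
  have hcomm' : ∀ (k l : ℕ) (p q : ℤ), ¬ ((h : ℤ) ∣ (p - q)) →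
      (Commute (cj (R ^ p) (A k)) (cj (R ^ q) (A l)) ∧
       Commute (cj (R ^ p) (A k)) (cj (R ^ q) (B l)) ∧
       Commute (cj (R ^ p) (B k)) (cj (R ^ q) (A l)) ∧
       Commute (cj (R ^ p) (B k)) (cj (R ^ q) (B l))) := by
    intro k l p q hpq
    rcases lt_or_ge k h with hk | hk
    · rcases lt_or_ge l h with hl | hl
      · rw [hAa k hk, hAa l hl, hBa k hk, hBa l hl]
        exact hcomm ⟨k, hk⟩ ⟨l, hl⟩ p q hpq
      · rw [hA1 l hl, hB1 l hl]
        refine ⟨?_, ?_, ?_, ?_⟩ <;> (rw [cj_one_right]; exact Commute.one_right _)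
    · rw [hA1 k hk, hB1 k hk]
      refine ⟨?_, ?_, ?_, ?_⟩ <;> (rw [cj_one_right]; exact Commute.one_left _)
  have hR' : ∀ k : ℕ, Commute (R ^ h) (A k) ∧ Commute (R ^ h) (B k) := by
    intro k
    rcases lt_or_ge k h with hk | hk
    · rw [hAa k hk, hBa k hk]; exact hR ⟨k, hk⟩
    · rw [hA1 k hk, hB1 k hk]; exact ⟨Commute.one_right _, Commute.one_right _⟩
  obtain ⟨X, Y, hXY⟩ := main_aux h hh R A B hcomm' hR'
  refine ⟨Y, X, ?_⟩
  have lhs_eq : (List.ofFn fun i => ⁅a i, b i⁆).prod = pr (fun k => ⁅A k, B k⁆) h := by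
    apply ofFn_eq_pr
    intro i
    show ⁅a i, b i⁆ = ⁅A i.val, B i.val⁆
    rw [hAa i.val i.isLt, hBa i.val i.isLt]
  rw [lhs_eq, hXY]
  congr 2
  symm
  apply ofFn_eq_pr
  intro i
  show (List.ofFn fun k : Fin (h - i.val) =>
      R ^ i.val *
        ⁅a ⟨k.val, lt_of_lt_of_le k.isLt (Nat.sub_le h i.val)⟩,
         b ⟨k.val, lt_of_lt_of_le k.isLt (Nat.sub_le h i.val)⟩⁆ *
        (R ^ i.val)⁻¹).prod =
    cj (R ^ (i.val : ℕ)) (pr (fun k => ⁅A k, B k⁆) (h - i.val))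
  rw [cj_pr]
  apply ofFn_eq_pr
  intro k
  have hkh : (k : ℕ) < h := lt_of_lt_of_le k.isLt (Nat.sub_le h i.val)
  show R ^ i.val *
      ⁅a ⟨k.val, lt_of_lt_of_le k.isLt (Nat.sub_le h i.val)⟩,
       b ⟨k.val, lt_of_lt_of_le k.isLt (Nat.sub_le h i.val)⟩⁆ *
      (R ^ i.val)⁻¹ = cj (R ^ i.val) ⁅A k.val, B k.val⁆
  rw [hAa k.val hkh, hBa k.val hkh, cj_def]
end
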